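/- For every index p ∈ {1,…,d}, the off-diagonal part with extra factor u_p² satisfies E[ (Σ_{i≠j} A_{i,j} u_i u_j u_p²)² ] = 3·Σ_{i>j} (A_{i,j} + A_{j,i})² + 12·Σ_{i : i>p} (A_{i,p} + A_{p,i})² + 12·Σ_{j : j<p} (A_{p,j} + A_{j,p})², where Σ_{i≠j} ranges over ordered pairs (i,j) with i ≠ j and Σ_{i>j} over pairs with 1 ≤ j < i ≤ d. -/

import Mathlib

/-
Symmetrising, `∑_{i ≠ j} A i j u_i u_j = ∑_{j < i} B i j u_i u_j` with `B i j = A i j + A j i`.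
After multiplying by `u_p²` and squaring, the expectation of a cross term `u_i u_j u_k u_l u_p⁴`
with `j < i`, `l < k` is a product of one-dimensional Gaussian moments; some coordinate occurs to
an odd power, hence the term vanishes, unless `(k, l) = (i, j)`. The diagonal terms give
`E[u_i² u_j² u_p⁴]`, which is `E[u⁶] E[u²] = 15` when `p ∈ {i, j}` and `E[u²]² E[u⁴] = 3`
otherwise; the moments come from the recursion `E[u^(n+2)] = (n + 1) E[u^n]`, i.e. Gaussian
integration by parts.
-/

open MeasureTheory ProbabilityTheory Finset

noncomputable def stdGaussianVec (d : ℕ) : Measure (Fin d → ℝ) :=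
  Measure.pi fun _ => gaussianReal 0 1

open Real

lemma gaussianPDFReal_zero_one (x : ℝ) :
    gaussianPDFReal 0 1 x = (√(2 * π))⁻¹ * rexp (-x ^ 2 / 2) := by
  simp [gaussianPDFReal]

lemma hasDerivAt_gaussianPDFReal_zero_one (x : ℝ) :
    HasDerivAt (gaussianPDFReal 0 1) (-x * gaussianPDFReal 0 1 x) x := by
  have h : HasDerivAt (fun y : ℝ => -y ^ 2 / 2) (-x) x :=
    ((hasDerivAt_pow 2 x).fun_neg.div_const 2).congr_deriv (by ring)
  rw [funext gaussianPDFReal_zero_one]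
  exact (h.exp.const_mul _).congr_deriv (by ring)

lemma integrable_pow_mul_gaussianPDFReal (n : ℕ) :
    Integrable fun x => x ^ n * gaussianPDFReal 0 1 x := by
  have h := (integrable_rpow_mul_exp_neg_mul_sq (b := 1 / 2) (by norm_num)
    (s := n) (by linarith [n.cast_nonneg (α := ℝ)])).const_mul (√(2 * π))⁻¹
  refine h.congr (ae_of_all _ fun x => ?_)
  simp only [rpow_natCast, gaussianPDFReal_zero_one]
  ring_nf

lemma integral_gaussianReal_zero_one (f : ℝ → ℝ) :
    ∫ x, f x ∂gaussianReal 0 1 = ∫ x, f x * gaussianPDFReal 0 1 x := by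
  simp [integral_gaussianReal_eq_integral_smul, mul_comm]

lemma integrable_pow_gaussianReal (n : ℕ) : Integrable (fun x => x ^ n) (gaussianReal 0 1) :=
  (memLp_id_gaussianReal (μ := 0) (v := 1) n).integrable_norm_pow'.mono' (by fun_prop)
    (ae_of_all _ fun x => by simp)

lemma integral_pow_add_two_gaussianReal (n : ℕ) :
    ∫ x, x ^ (n + 2) ∂gaussianReal 0 1 = (n + 1) * ∫ x, x ^ n ∂gaussianReal 0 1 := by
  have hu (x : ℝ) : HasDerivAt (fun y => y ^ (n + 1)) ((n + 1) * x ^ n) x := by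
    simpa using hasDerivAt_pow (n + 1) x
  have hv (x : ℝ) :
      HasDerivAt (fun y => -gaussianPDFReal 0 1 y) (x * gaussianPDFReal 0 1 x) x :=
    (hasDerivAt_gaussianPDFReal_zero_one x).fun_neg.congr_deriv (by ring)
  have ibp := integral_mul_deriv_eq_deriv_mul_of_integrable (fun x _ => hu x) (fun x _ => hv x)
    ?_ ?_ ?_
  · simp only [integral_gaussianReal_zero_one]
    calc ∫ x, x ^ (n + 2) * gaussianPDFReal 0 1 x
        = ∫ x, x ^ (n + 1) * (x * gaussianPDFReal 0 1 x) := by congr 1 with x; ring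
      _ = -∫ x, (n + 1) * x ^ n * -gaussianPDFReal 0 1 x := ibp
      _ = (n + 1) * ∫ x, x ^ n * gaussianPDFReal 0 1 x := by
        rw [← integral_neg, ← integral_const_mul]; congr 1 with x; ring
  · exact (integrable_pow_mul_gaussianPDFReal (n + 2)).congr (ae_of_all _ fun x => by
      simp only [Pi.mul_apply]; ring)
  · exact ((integrable_pow_mul_gaussianPDFReal n).const_mul (-(n + 1 : ℝ))).congr
      (ae_of_all _ fun x => by simp only [Pi.mul_apply]; ring)
  · exact (integrable_pow_mul_gaussianPDFReal (n + 1)).neg.congr (ae_of_all _ fun x => by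
      simp only [Pi.mul_apply, Pi.neg_apply]; ring)

open scoped Nat in
lemma integral_pow_two_mul_gaussianReal (k : ℕ) :
    ∫ x, x ^ (2 * k) ∂gaussianReal 0 1 = (2 * k - 1 : ℕ)‼ := by
  induction k with
  | zero => simp
  | succ k ih =>
    rw [mul_add_one, integral_pow_add_two_gaussianReal, ih]
    rcases k with _ | k
    · simp
    · rw [show 2 * (k + 1) + 2 - 1 = 2 * k + 1 + 2 by omega,
        show 2 * (k + 1) - 1 = 2 * k + 1 by omega, Nat.doubleFactorial_add_two]
      push_cast
      ring

lemma integral_pow_gaussianReal_of_odd {n : ℕ} (hn : Odd n) :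
    ∫ x, x ^ n ∂gaussianReal 0 1 = 0 := by
  obtain ⟨k, rfl⟩ := hn
  induction k with
  | zero => simp
  | succ k ih =>
    rw [show 2 * (k + 1) + 1 = 2 * k + 1 + 2 by ring, integral_pow_add_two_gaussianReal, ih,
      mul_zero]

lemma Finset.prod_univ_pow_count_eq_multiset_prod_map {ι M : Type*} [Fintype ι] [DecidableEq ι]
    [CommMonoid M] (s : Multiset ι) (f : ι → M) :
    ∏ i, f i ^ s.count i = (s.map f).prod := by
  rw [Finset.prod_multiset_map_count]
  exact (Finset.prod_subset (Finset.subset_univ _) fun i _ hi => by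
    rw [Multiset.count_eq_zero_of_notMem (Multiset.mem_toFinset.not.mp hi), pow_zero]).symm

lemma integral_finsetSum_sq {α ι : Type*} [MeasurableSpace α] {μ : Measure α} (s : Finset ι)
    (f : ι → α → ℝ) (hf : ∀ i ∈ s, ∀ j ∈ s, Integrable (fun x => f i x * f j x) μ) :
    ∫ x, (∑ i ∈ s, f i x) ^ 2 ∂μ = ∑ i ∈ s, ∑ j ∈ s, ∫ x, f i x * f j x ∂μ := by
  simp_rw [sq, sum_mul_sum]
  rw [integral_finsetSum _ fun i hi => integrable_finsetSum _ (hf i hi)]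
  exact sum_congr rfl fun i hi => integral_finsetSum _ (hf i hi)

section PairSums

variable {ι M : Type*} [Fintype ι] [LinearOrder ι] [AddCommMonoid M]

lemma sum_sum_filter_ne_eq_sum_sum_filter_lt (f : ι → ι → M) :
    ∑ i, ∑ j ∈ univ.filter (fun j => j ≠ i), f i j
      = ∑ i, ∑ j ∈ univ.filter (fun j => j < i), (f i j + f j i) := by
  have hsplit (i : ι) : ∑ j ∈ univ.filter (fun j => j ≠ i), f i j
      = ∑ j ∈ univ.filter (fun j => j < i), f i j
        + ∑ j ∈ univ.filter (fun j => i < j), f i j := by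
    simp only [sum_filter, ← sum_add_distrib]
    refine sum_congr rfl fun j _ => ?_
    rcases lt_trichotomy j i with h | rfl | h
    · simp [h, h.ne, h.not_gt]
    · simp
    · simp [h, h.ne', h.not_gt]
  simp_rw [hsplit, sum_add_distrib]
  congr 1
  exact sum_comm' fun i j => by simp

lemma sum_sum_filter_lt_eq_sum_filter_prod (f : ι → ι → M) :
    ∑ i, ∑ j ∈ univ.filter (fun j => j < i), f i j
      = ∑ q ∈ univ.filter (fun q : ι × ι => q.2 < q.1), f q.1 q.2 :=
  (sum_finset_product' _ _ _ fun q => by simp).symm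

end PairSums

lemma sum_sum_filter_lt_mul_ite {ι : Type*} [Fintype ι] [LinearOrder ι] (c : ι → ι → ℝ)
    (p : ι) :
    ∑ i, ∑ j ∈ univ.filter (fun j => j < i), c i j * (if p = i ∨ p = j then 15 else 3)
      = 3 * (∑ i, ∑ j ∈ univ.filter (fun j => j < i), c i j)
        + 12 * (∑ i ∈ univ.filter (fun i => p < i), c i p)
        + 12 * (∑ j ∈ univ.filter (fun j => j < p), c p j) := by
  have hweight (i j : ι) (hj : j ∈ univ.filter (fun j => j < i)) :
      c i j * (if p = i ∨ p = j then 15 else 3)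
        = 3 * c i j + 12 * (if j = p then c i j else 0)
          + 12 * (if i = p then c i j else 0) := by
    have hji : j < i := by simpa using hj
    by_cases hpi : p = i
    · subst hpi; simp [hji.ne]; ring
    · by_cases hpj : p = j
      · subst hpj; simp [hji.ne']; ring
      · simp [hpi, hpj, Ne.symm hpi, Ne.symm hpj, mul_comm]
  simp_rw [sum_congr rfl fun i _ => sum_congr rfl (hweight i), sum_add_distrib, ← mul_sum]
  congr 2
  · simp [sum_ite_eq', ← sum_filter]
  · simp [sum_ite_eq']

section StdGaussianVec

variable {d : ℕ}

lemma integrable_multiset_prod_stdGaussianVec (s : Multiset (Fin d)) :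
    Integrable (fun u => (s.map u).prod) (stdGaussianVec d) := by
  simp_rw [← Finset.prod_univ_pow_count_eq_multiset_prod_map]
  exact Integrable.fintype_prod fun c => integrable_pow_gaussianReal _

lemma integral_multiset_prod_stdGaussianVec (s : Multiset (Fin d)) :
    ∫ u, (s.map u).prod ∂stdGaussianVec d
      = ∏ c ∈ s.toFinset, ∫ x, x ^ s.count c ∂gaussianReal 0 1 := by
  simp_rw [← Finset.prod_univ_pow_count_eq_multiset_prod_map]
  rw [stdGaussianVec, integral_fintype_prod_eq_prod (fun c x => x ^ s.count c)]
  refine (Finset.prod_subset (Finset.subset_univ _) fun c _ hc => ?_).symm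
  simp [Multiset.count_eq_zero_of_notMem (Multiset.mem_toFinset.not.mp hc)]

lemma integral_multiset_prod_stdGaussianVec_eq_zero {s : Multiset (Fin d)} {c : Fin d}
    (hc : Odd (s.count c)) : ∫ u, (s.map u).prod ∂stdGaussianVec d = 0 := by
  rw [integral_multiset_prod_stdGaussianVec]
  exact Finset.prod_eq_zero (Multiset.mem_toFinset.mpr (Multiset.count_pos.mp hc.pos))
    (integral_pow_gaussianReal_of_odd hc)

lemma mul_mul_pow_two_mul_eq_multiset_prod (u : Fin d → ℝ) (i j k l p : Fin d) :
    u i * u j * u p ^ 2 * (u k * u l * u p ^ 2)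
      = (({i, j, k, l, p, p, p, p} : Multiset (Fin d)).map u).prod := by
  simp only [Multiset.insert_eq_cons, Multiset.map_cons, Multiset.prod_cons,
    Multiset.map_singleton, Multiset.prod_singleton]
  ring

lemma integrable_mul_mul_pow_two_mul_stdGaussianVec (i j k l p : Fin d) :
    Integrable (fun u => u i * u j * u p ^ 2 * (u k * u l * u p ^ 2)) (stdGaussianVec d) := by
  simpa only [mul_mul_pow_two_mul_eq_multiset_prod] using
    integrable_multiset_prod_stdGaussianVec _

lemma integral_mul_mul_pow_two_mul_stdGaussianVec {i j k l : Fin d} (p : Fin d) (hji : j < i)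
    (hlk : l < k) :
    ∫ u, u i * u j * u p ^ 2 * (u k * u l * u p ^ 2) ∂stdGaussianVec d
      = if k = i ∧ l = j then if p = i ∨ p = j then 15 else 3 else 0 := by
  have h2 : ∫ x, x ^ 2 ∂gaussianReal 0 1 = 1 := by
    simpa using integral_pow_two_mul_gaussianReal 1
  have h4 : ∫ x, x ^ 4 ∂gaussianReal 0 1 = 3 := by
    simpa using integral_pow_two_mul_gaussianReal 2
  have h6 : ∫ x, x ^ 6 ∂gaussianReal 0 1 = 15 := by
    simpa using integral_pow_two_mul_gaussianReal 3
  simp_rw [mul_mul_pow_two_mul_eq_multiset_prod]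
  split_ifs with hkl hp
  · obtain ⟨rfl, rfl⟩ := hkl
    rw [integral_multiset_prod_stdGaussianVec]
    rcases hp with rfl | rfl <;> simp [Multiset.count_cons, hji.ne, hji.ne', h2, h6]
  · obtain ⟨rfl, rfl⟩ := hkl
    rw [integral_multiset_prod_stdGaussianVec]
    push Not at hp
    simp [Multiset.count_cons, hji.ne, hji.ne', hp.1, hp.2, Ne.symm hp.1, Ne.symm hp.2, h2, h4]
  · -- an index occurring exactly once among `i, j, k, l` has an odd count
    by_cases hi : i = k ∨ i = l
    · have hj : j ≠ k ∧ j ≠ l := by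
        rcases hi with rfl | rfl
        · exact ⟨hji.ne, fun h => hkl ⟨rfl, h.symm⟩⟩
        · exact ⟨(hji.trans hlk).ne, hji.ne⟩
      refine integral_multiset_prod_stdGaussianVec_eq_zero (c := j) ?_
      simp [Multiset.count_cons, Multiset.count_singleton, hj.1, hj.2, hji.ne]
      split_ifs <;> decide
    · refine integral_multiset_prod_stdGaussianVec_eq_zero (c := i) ?_
      push Not at hi
      simp [Multiset.count_cons, Multiset.count_singleton, hi.1, hi.2, hji.ne']
      split_ifs <;> decide

lemma integral_sq_sum_filter_lt_stdGaussianVec (b : Fin d × Fin d → ℝ) (p : Fin d) :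
    ∫ u, (∑ q ∈ univ.filter (fun q : Fin d × Fin d => q.2 < q.1),
        b q * (u q.1 * u q.2 * u p ^ 2)) ^ 2 ∂stdGaussianVec d
      = ∑ q ∈ univ.filter (fun q : Fin d × Fin d => q.2 < q.1),
          b q ^ 2 * (if p = q.1 ∨ p = q.2 then 15 else 3) := by
  have hprod (q r : Fin d × Fin d) (u : Fin d → ℝ) :
      b q * (u q.1 * u q.2 * u p ^ 2) * (b r * (u r.1 * u r.2 * u p ^ 2))
        = b q * b r * (u q.1 * u q.2 * u p ^ 2 * (u r.1 * u r.2 * u p ^ 2)) := by ring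
  rw [integral_finsetSum_sq _ _ fun q _ r _ => by
    simpa only [hprod] using (integrable_mul_mul_pow_two_mul_stdGaussianVec _ _ _ _ p).const_mul _]
  refine sum_congr rfl fun q hq => ?_
  have hq' : q.2 < q.1 := by simpa using hq
  calc ∑ r ∈ univ.filter (fun q : Fin d × Fin d => q.2 < q.1),
        ∫ u, b q * (u q.1 * u q.2 * u p ^ 2) * (b r * (u r.1 * u r.2 * u p ^ 2)) ∂stdGaussianVec d
      = ∑ r ∈ univ.filter (fun q : Fin d × Fin d => q.2 < q.1),
          b q * b r * (if r = q then if p = q.1 ∨ p = q.2 then 15 else 3 else 0) := by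
        refine sum_congr rfl fun r hr => ?_
        simp_rw [hprod, integral_const_mul,
          integral_mul_mul_pow_two_mul_stdGaussianVec p hq' (by simpa using hr), Prod.ext_iff]
    _ = b q ^ 2 * (if p = q.1 ∨ p = q.2 then 15 else 3) := by
        simp [mul_ite, sum_ite_eq', hq, sq]

end StdGaussianVec

theorem offdiag_second_moment_up_sq_general {d : ℕ}
    (A : Matrix (Fin d) (Fin d) ℝ) (p : Fin d) :
    ∫ u, (∑ i, ∑ j ∈ Finset.univ.filter (fun j => j ≠ i),
        A i j * u i * u j * (u p) ^ 2) ^ 2 ∂(stdGaussianVec d)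
      = 3 * (∑ i, ∑ j ∈ Finset.univ.filter (fun j => j < i), (A i j + A j i) ^ 2)
        + 12 * (∑ i ∈ Finset.univ.filter (fun i => p < i), (A i p + A p i) ^ 2)
        + 12 * (∑ j ∈ Finset.univ.filter (fun j => j < p), (A p j + A j p) ^ 2) := by
  have hsymm (u : Fin d → ℝ) :
      ∑ i, ∑ j ∈ univ.filter (fun j => j ≠ i), A i j * u i * u j * u p ^ 2
        = ∑ q ∈ univ.filter (fun q : Fin d × Fin d => q.2 < q.1),
            (A q.1 q.2 + A q.2 q.1) * (u q.1 * u q.2 * u p ^ 2) := by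
    rw [sum_sum_filter_ne_eq_sum_sum_filter_lt, sum_sum_filter_lt_eq_sum_filter_prod]
    exact sum_congr rfl fun q _ => by ring
  simp_rw [hsymm, integral_sq_sum_filter_lt_stdGaussianVec]
  exact (sum_sum_filter_lt_eq_sum_filter_prod fun i j =>
    (A i j + A j i) ^ 2 * if p = i ∨ p = j then (15 : ℝ) else 3).symm.trans
      (sum_sum_filter_lt_mul_ite _ p)

theorem offdiag_second_moment_up_sq {d : ℕ} (hd : 1 ≤ d)
    (A : Matrix (Fin d) (Fin d) ℝ) (p : Fin d) :
    ∫ u, (∑ i, ∑ j ∈ Finset.univ.filter (fun j => j ≠ i),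
        A i j * u i * u j * (u p) ^ 2) ^ 2 ∂(stdGaussianVec d)
      = 3 * (∑ i, ∑ j ∈ Finset.univ.filter (fun j => j < i), (A i j + A j i) ^ 2)
        + 12 * (∑ i ∈ Finset.univ.filter (fun i => p < i), (A i p + A p i) ^ 2)
        + 12 * (∑ j ∈ Finset.univ.filter (fun j => j < p), (A p j + A j p) ^ 2) :=
  offdiag_second_moment_up_sq_general A p
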